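/- In a deterministic finite automaton with n states that possesses a synchronizing word, for every subset S of states with |S| ≥ 2 there exists a word w of length at most n² with |Sw| < |S|. -/

import Mathlib

/-!
Two distinct states `p, q` of `S` are merged by the synchronizing word. Read in the automaton
of pairs `(p, q) ↦ (δ p a, δ q a)`, a merging word is a path from `(p, q)` to the diagonal, and
cutting out loops shortens any such path to fewer than `n²` letters. The shortened word maps `p`
and `q` to the same state, so it shrinks `S`.
-/

theorem exists_length_lt_card_foldl_eq {σ A : Type*} [Fintype σ] (f : σ → A → σ) (s : σ)
    (x : List A) : ∃ y : List A, y.length < Fintype.card σ ∧ y.foldl f s = x.foldl f s := by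
  induction hn : x.length using Nat.strong_induction_on generalizing x with
  | _ n ih =>
    by_cases hlen : x.length < Fintype.card σ
    · exact ⟨x, hlen, rfl⟩
    -- only the transition function of `M` matters; `evalFrom_split` finds a loop `b` to cut out
    let M : DFA A σ := ⟨f, s, ∅⟩
    obtain ⟨r, a, b, c, rfl, -, hb, ha, hloop, -⟩ := M.evalFrom_split (not_lt.mp hlen) rfl
    have hshort : (a ++ c).length < n := by
      have := List.length_pos_of_ne_nil hb
      simp only [← hn, List.length_append]
      omega
    obtain ⟨y, hy, hys⟩ := ih _ hshort (a ++ c) rfl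
    refine ⟨y, hy, hys.trans ?_⟩
    change M.evalFrom s (a ++ c) = M.evalFrom s (a ++ b ++ c)
    rw [M.evalFrom_of_append, M.evalFrom_of_append, M.evalFrom_of_append, ha, hloop]

theorem foldl_prodMap_eq {Q A : Type*} (δ : Q → A → Q) (w : List A) (p q : Q) :
    w.foldl (fun r a => Prod.map (δ · a) (δ · a) r) (p, q) = (w.foldl δ p, w.foldl δ q) := by
  induction w generalizing p q with
  | nil => rfl
  | cons a w ih => exact ih _ _

theorem exists_length_lt_sq_foldl_eq {Q A : Type*} [Fintype Q] (δ : Q → A → Q) {p q : Q}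
    {w : List A} (hw : w.foldl δ p = w.foldl δ q) :
    ∃ v : List A, v.length < Fintype.card Q ^ 2 ∧ v.foldl δ p = v.foldl δ q := by
  obtain ⟨v, hv, hvw⟩ :=
    exists_length_lt_card_foldl_eq (fun r a => Prod.map (δ · a) (δ · a) r) (p, q) w
  rw [foldl_prodMap_eq, foldl_prodMap_eq, Prod.mk.injEq] at hvw
  refine ⟨v, by simpa [Fintype.card_prod, sq] using hv, ?_⟩
  rw [hvw.1, hvw.2, hw]

theorem Finset.card_image_lt_of_map_eq {α β : Type*} [DecidableEq β] {f : α → β}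
    {s : Finset α} {p q : α} (hp : p ∈ s) (hq : q ∈ s) (hpq : p ≠ q) (hf : f p = f q) :
    (s.image f).card < s.card :=
  Finset.card_image_le.lt_of_ne fun h => hpq (Finset.injOn_of_card_image_eq h hp hq hf)

/-- In a synchronizing DFA with `n` states, every subset of at least two states can be
compressed by a word of length at most `n^2`. -/
theorem stmt9 {Q A : Type*} [Fintype Q] [DecidableEq Q] (δ : Q → A → Q)
    (hsync : ∃ s : List A, ∃ q0 : Q, ∀ p : Q, s.foldl δ p = q0)
    (S : Finset Q) (hS : 2 ≤ S.card) :
    ∃ w : List A, w.length ≤ (Fintype.card Q) ^ 2 ∧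
      (S.image fun p => w.foldl δ p).card < S.card := by
  obtain ⟨p, hp, q, hq, hpq⟩ := Finset.one_lt_card.mp hS
  obtain ⟨s, q0, hs⟩ := hsync
  obtain ⟨w, hwlen, hw⟩ := exists_length_lt_sq_foldl_eq δ ((hs p).trans (hs q).symm)
  exact ⟨w, hwlen.le, Finset.card_image_lt_of_map_eq hp hq hpq hw⟩
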